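/- arXiv:math-ph/0102004 — 3 statements merged into one kernel-verified Lean document; each statement's English description precedes it below -/
import Mathlib

section
/- Let N ≥ 2, let e_1, …, e_N be real numbers and m_1, …, m_N be positive real numbers. Define the (N−1)×(N−1) tridiagonal matrix 𝒜_N with diagonal entries (𝒜_N)_{jj} = e_{j+1}² m_j + e_j² m_{j+1} for j = 1, …, N−1 and off-diagonal entries (𝒜_N)_{j,j+1} = (𝒜_N)_{j+1,j} = −e_j e_{j+2} m_{j+1} for j = 1, …, N−2 (all other entries zero). Then det 𝒜_N = (∏_{j=2}^{N−1} e_j²) · (∑_{j=1}^{N} e_j² ∏_{i≠j} m_i). -/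
open Finset

/-- The entry of the tridiagonal matrix, as a function of natural indices. -/
noncomputable def TCMentry (e m : ℕ → ℝ) (a b : ℕ) : ℝ :=
  if a = b then e (a + 2) ^ 2 * m (a + 1) + e (a + 1) ^ 2 * m (a + 2)
  else if a + 1 = b then -(e (a + 1) * e (a + 3) * m (a + 2))
  else if b + 1 = a then -(e (b + 1) * e (b + 3) * m (b + 2))
  else 0

/-- The tridiagonal matrix of size `n`. -/
noncomputable def TCMmat (e m : ℕ → ℝ) (n : ℕ) : Matrix (Fin n) (Fin n) ℝ :=
  Matrix.of fun i j : Fin n => TCMentry e m (i : ℕ) (j : ℕ)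

/-- The three-term determinant recursion. -/
lemma TCM_det_rec (e m : ℕ → ℝ) (n : ℕ) :
    (TCMmat e m (n + 2)).det
      = (e (n + 3) ^ 2 * m (n + 2) + e (n + 2) ^ 2 * m (n + 3)) * (TCMmat e m (n + 1)).det
        - (e (n + 1) * e (n + 3) * m (n + 2)) ^ 2 * (TCMmat e m n).det := by
  have hlast2 : (Fin.last (n + 1)).succAbove = Fin.castSucc := Fin.succAbove_last
  have hlast1 : (Fin.last n).succAbove = Fin.castSucc := Fin.succAbove_last
  have hj2 : ∀ b : Fin n,
      (⟨n, by omega⟩ : Fin (n + 2)).succAbove b.castSucc = b.castSucc.castSucc :=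
    fun b => Fin.succAbove_of_castSucc_lt _ _ (by
      simp only [Fin.lt_def, Fin.coe_castSucc]
      exact b.isLt)
  have hj3 : (⟨n, by omega⟩ : Fin (n + 2)).succAbove (Fin.last n) = Fin.last (n + 1) := by
    rw [Fin.succAbove_of_le_castSucc _ _ (le_of_eq (Fin.ext (by simp)))]
    exact Fin.succ_last n
  rw [Matrix.det_succ_row (TCMmat e m (n + 2)) (Fin.last (n + 1))]
  rw [Finset.sum_eq_add_of_mem (⟨n, by omega⟩ : Fin (n + 2)) (Fin.last (n + 1))
    (Finset.mem_univ _) (Finset.mem_univ _)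
    (by simp [Fin.ext_iff, Fin.last])
    (by
      intro c _ hc
      have hc1 : (c : ℕ) ≠ n := fun h => hc.1 (Fin.ext (by simp [h]))
      have hc2 : (c : ℕ) ≠ n + 1 := fun h => hc.2 (Fin.ext (by simp [Fin.last, h]))
      have hcn : (c : ℕ) < n + 2 := c.isLt
      have hz : TCMmat e m (n + 2) (Fin.last (n + 1)) c = 0 := by
        show TCMentry e m (n + 1) (c : ℕ) = 0
        unfold TCMentry
        rw [if_neg (by omega), if_neg (by omega), if_neg (by omega)]
      rw [hz]
      ring)]
  -- the minor at the last column equals `TCMmat e m (n+1)`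
  have hminor1 : (TCMmat e m (n + 2)).submatrix (Fin.last (n + 1)).succAbove
      (Fin.last (n + 1)).succAbove = TCMmat e m (n + 1) := by
    ext a b
    simp [TCMmat, hlast2, Matrix.submatrix_apply]
  -- the inner minor
  have hminor2 :
      ((TCMmat e m (n + 2)).submatrix (Fin.last (n + 1)).succAbove
        (⟨n, by omega⟩ : Fin (n + 2)).succAbove).det
      = -(e (n + 1) * e (n + 3) * m (n + 2)) * (TCMmat e m n).det := by
    set M := (TCMmat e m (n + 2)).submatrix (Fin.last (n + 1)).succAbove
        (⟨n, by omega⟩ : Fin (n + 2)).succAbove with hM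
    rw [Matrix.det_succ_column M (Fin.last n)]
    rw [Finset.sum_eq_single (Fin.last n)
      (by
        intro a _ ha
        have ha' : (a : ℕ) ≠ n := fun h => ha (Fin.ext (by simp [Fin.last, h]))
        have han : (a : ℕ) < n + 1 := a.isLt
        have hz : M a (Fin.last n) = 0 := by
          rw [hM]
          simp only [Matrix.submatrix_apply, hlast2, hj3]
          show TCMentry e m (a : ℕ) (n + 1) = 0
          unfold TCMentry
          rw [if_neg (by omega), if_neg (by omega), if_neg (by omega)]
        rw [hz]; ring)
      (by intro h; exact absurd (Finset.mem_univ _) h)]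
    have hval : M (Fin.last n) (Fin.last n) = -(e (n + 1) * e (n + 3) * m (n + 2)) := by
      rw [hM]
      simp only [Matrix.submatrix_apply, hlast2, hj3]
      show TCMentry e m n (n + 1) = _
      unfold TCMentry
      rw [if_neg (by omega), if_pos (by omega)]
    have hsub : M.submatrix (Fin.last n).succAbove (Fin.last n).succAbove = TCMmat e m n := by
      ext a b
      rw [hM]
      simp only [Matrix.submatrix_apply, hlast2, hlast1, hj2]
      simp [TCMmat]
    rw [hval, hsub]
    have hsign : ((-1 : ℝ)) ^ ((Fin.last n : ℕ) + (Fin.last n : ℕ)) = 1 := by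
      simp only [Fin.val_last]
      rw [← two_mul, pow_mul]
      norm_num
    rw [hsign]
    ring
  have hd : TCMmat e m (n + 2) (Fin.last (n + 1)) (Fin.last (n + 1))
      = e (n + 3) ^ 2 * m (n + 2) + e (n + 2) ^ 2 * m (n + 3) := by
    show TCMentry e m (n + 1) (n + 1) = _
    unfold TCMentry
    rw [if_pos rfl]
  have hc : TCMmat e m (n + 2) (Fin.last (n + 1)) (⟨n, by omega⟩ : Fin (n + 2))
      = -(e (n + 1) * e (n + 3) * m (n + 2)) := by
    show TCMentry e m (n + 1) n = _
    unfold TCMentry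
    rw [if_neg (by omega), if_neg (by omega), if_pos (by omega)]
  rw [hminor1, hminor2, hd, hc]
  have hsign1 : ((-1 : ℝ)) ^ ((Fin.last (n + 1) : ℕ) + ((⟨n, by omega⟩ : Fin (n + 2)) : ℕ))
      = -1 := by
    simp only [Fin.val_last]
    have h2n : (n + 1) + n = 2 * n + 1 := by ring
    rw [h2n, pow_succ, pow_mul]
    norm_num
  have hsign2 : ((-1 : ℝ)) ^ ((Fin.last (n + 1) : ℕ) + (Fin.last (n + 1) : ℕ)) = 1 := by
    simp only [Fin.val_last]
    rw [← two_mul, pow_mul]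
    norm_num
  rw [hsign1, hsign2]
  ring

/-- The mass sum. -/
noncomputable def TCMsum (e m : ℕ → ℝ) (k : ℕ) : ℝ :=
  ∑ j ∈ Finset.Icc 1 k, e j ^ 2 * ∏ i ∈ (Finset.Icc 1 k).erase j, m i

lemma TCMsum_succ (e m : ℕ → ℝ) (k : ℕ) (hk : 1 ≤ k) :
    TCMsum e m (k + 1)
      = m (k + 1) * TCMsum e m k + e (k + 1) ^ 2 * ∏ i ∈ Finset.Icc 1 k, m i := by
  have hins : Finset.Icc 1 (k + 1) = insert (k + 1) (Finset.Icc 1 k) := by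
    ext x; simp only [Finset.mem_Icc, Finset.mem_insert]; omega
  have hk1 : (k + 1) ∉ Finset.Icc 1 k := by simp
  unfold TCMsum
  rw [hins, Finset.sum_insert hk1]
  rw [Finset.erase_insert hk1]
  have hrest : ∀ j ∈ Finset.Icc 1 k,
      e j ^ 2 * ∏ i ∈ (insert (k + 1) (Finset.Icc 1 k)).erase j, m i
        = m (k + 1) * (e j ^ 2 * ∏ i ∈ (Finset.Icc 1 k).erase j, m i) := by
    intro j hj
    have hjk : j ≤ k := (Finset.mem_Icc.mp hj).2
    have hne : j ≠ k + 1 := by omega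
    rw [Finset.erase_insert_of_ne (show k + 1 ≠ j by omega)]
    rw [Finset.prod_insert (by simp [Finset.mem_erase])]
    ring
  rw [Finset.sum_congr rfl hrest, ← Finset.mul_sum]
  ring

/-- The determinant formula, stated for matrices of size `n ≥ 1`. -/
lemma TCM_det_eq (e m : ℕ → ℝ) (n : ℕ) (hn : 1 ≤ n) :
    (TCMmat e m n).det
      = (∏ j ∈ Finset.Icc 2 n, e j ^ 2) * TCMsum e m (n + 1) := by
  induction n using Nat.twoStepInduction with
  | zero => omega
  | one =>
    -- n = 1 : a 1×1 matrix
    have h1 : (TCMmat e m 1).det = TCMentry e m 0 0 := by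
      rw [Matrix.det_fin_one]; rfl
    rw [h1]
    unfold TCMentry
    rw [if_pos rfl]
    have h2 : Finset.Icc 2 1 = (∅ : Finset ℕ) := by decide
    rw [h2, Finset.prod_empty, one_mul]
    unfold TCMsum
    have h12 : Finset.Icc 1 2 = ({1, 2} : Finset ℕ) := by decide
    rw [h12, Finset.sum_pair (by norm_num : (1 : ℕ) ≠ 2),
      show ({1, 2} : Finset ℕ).erase 1 = {2} by decide,
      show ({1, 2} : Finset ℕ).erase 2 = {1} by decide,
      Finset.prod_singleton, Finset.prod_singleton]
    norm_num
    ring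
  | more k ih ih1 =>
    rcases Nat.eq_zero_or_pos k with hk | hk
    · -- n = 2 : a 2×2 matrix
      subst hk
      have hdet : (TCMmat e m 2).det
          = TCMentry e m 0 0 * TCMentry e m 1 1 - TCMentry e m 0 1 * TCMentry e m 1 0 := by
        rw [Matrix.det_fin_two]; rfl
      rw [hdet]
      unfold TCMentry
      norm_num
      unfold TCMsum
      have h13 : Finset.Icc 1 3 = ({1, 2, 3} : Finset ℕ) := by decide
      rw [h13]
      rw [show ({1, 2, 3} : Finset ℕ) = insert 1 {2, 3} from rfl]
      rw [Finset.sum_insert (by decide), show ({2, 3} : Finset ℕ) = insert 2 {3} from rfl,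
        Finset.sum_insert (by decide), Finset.sum_singleton]
      rw [show (insert 1 (insert 2 ({3} : Finset ℕ))).erase 1 = {2, 3} by decide,
        show (insert 1 (insert 2 ({3} : Finset ℕ))).erase 2 = {1, 3} by decide,
        show (insert 1 (insert 2 ({3} : Finset ℕ))).erase 3 = {1, 2} by decide]
      rw [Finset.prod_pair (by norm_num : (2 : ℕ) ≠ 3),
        Finset.prod_pair (by norm_num : (1 : ℕ) ≠ 3),
        Finset.prod_pair (by norm_num : (1 : ℕ) ≠ 2)]
      ring
    · -- induction step : n = k + 2 with k ≥ 1
      have hrec := TCM_det_rec e m k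
      rw [hrec, ih hk, ih1 (by omega)]
      have hprod2 : (∏ j ∈ Finset.Icc 2 (k + 2), e j ^ 2)
          = (∏ j ∈ Finset.Icc 2 (k + 1), e j ^ 2) * e (k + 2) ^ 2 := by
        rw [← Finset.prod_Icc_succ_top (by omega : 2 ≤ k + 2)]
      have hprod1 : (∏ j ∈ Finset.Icc 2 (k + 1), e j ^ 2)
          = (∏ j ∈ Finset.Icc 2 k, e j ^ 2) * e (k + 1) ^ 2 := by
        rw [← Finset.prod_Icc_succ_top (by omega : 2 ≤ k + 1)]
      have hS3 : TCMsum e m (k + 3)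
          = m (k + 3) * TCMsum e m (k + 2) + e (k + 3) ^ 2 * ∏ i ∈ Finset.Icc 1 (k + 2), m i :=
        TCMsum_succ e m (k + 2) (by omega)
      have hS2 : TCMsum e m (k + 2)
          = m (k + 2) * TCMsum e m (k + 1) + e (k + 2) ^ 2 * ∏ i ∈ Finset.Icc 1 (k + 1), m i :=
        TCMsum_succ e m (k + 1) (by omega)
      have hMprod : (∏ i ∈ Finset.Icc 1 (k + 2), m i)
          = m (k + 2) * ∏ i ∈ Finset.Icc 1 (k + 1), m i := by
        rw [show Finset.Icc 1 (k + 2) = insert (k + 2) (Finset.Icc 1 (k + 1)) by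
          ext x; simp only [Finset.mem_Icc, Finset.mem_insert]; omega]
        rw [Finset.prod_insert (by simp)]
      rw [hprod2, hprod1, hS3, hS2, hMprod]
      ring

theorem det_tridiagonal_charge_mass (N : ℕ) (hN : 2 ≤ N) (e m : ℕ → ℝ)
    (hm : ∀ i, 1 ≤ i → i ≤ N → 0 < m i) :
    (Matrix.of fun i j : Fin (N - 1) =>
      if (i : ℕ) = (j : ℕ) then
        e ((i : ℕ) + 2) ^ 2 * m ((i : ℕ) + 1) + e ((i : ℕ) + 1) ^ 2 * m ((i : ℕ) + 2)
      else if (i : ℕ) + 1 = (j : ℕ) then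
        -(e ((i : ℕ) + 1) * e ((i : ℕ) + 3) * m ((i : ℕ) + 2))
      else if (j : ℕ) + 1 = (i : ℕ) then
        -(e ((j : ℕ) + 1) * e ((j : ℕ) + 3) * m ((j : ℕ) + 2))
      else 0).det
    = (∏ j ∈ Finset.Icc 2 (N - 1), e j ^ 2) *
      (∑ j ∈ Finset.Icc 1 N, e j ^ 2 * ∏ i ∈ (Finset.Icc 1 N).erase j, m i) := by
  have hmat : (Matrix.of fun i j : Fin (N - 1) =>
      if (i : ℕ) = (j : ℕ) then
        e ((i : ℕ) + 2) ^ 2 * m ((i : ℕ) + 1) + e ((i : ℕ) + 1) ^ 2 * m ((i : ℕ) + 2)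
      else if (i : ℕ) + 1 = (j : ℕ) then
        -(e ((i : ℕ) + 1) * e ((i : ℕ) + 3) * m ((i : ℕ) + 2))
      else if (j : ℕ) + 1 = (i : ℕ) then
        -(e ((j : ℕ) + 1) * e ((j : ℕ) + 3) * m ((j : ℕ) + 2))
      else 0) = TCMmat e m (N - 1) := rfl
  rw [hmat, TCM_det_eq e m (N - 1) (by omega)]
  have hN1 : N - 1 + 1 = N := by omega
  rw [hN1]
  rfl
end

section
/- Let N ≥ 2, e_1,…,e_N be nonzero reals and m_1,…,m_N positive reals, and let 𝒜_N be the tridiagonal matrix of the previous context. Then det 𝒜_N > 0; in particular 𝒜_N is invertible. -/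
/-!
Write `𝒜_N = Bᵀ D B`, where `D = diag(m_1, …, m_N)` and `B` is the `N × (N - 1)` lower
bidiagonal matrix whose `j`-th column has `e_{j+1}` in row `j` and `-e_j` in row `j + 1`. The top
`(N - 1) × (N - 1)` block of `B` is lower triangular with diagonal `e_2, …, e_N`, so `B` is
injective; as `D` is positive definite, so is `𝒜_N`, whence `det 𝒜_N > 0`.
-/

open Finset Matrix

section CommRing

variable {R : Type*} [CommRing R]

/-- `chargeMassMatrix e m (N - 1)` is `𝒜_N`, with rows and columns indexed from `0`. -/
def chargeMassMatrix (e m : ℕ → R) (n : ℕ) : Matrix (Fin n) (Fin n) R :=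
  Matrix.of fun i j : Fin n =>
    if (i : ℕ) = (j : ℕ) then
      e ((i : ℕ) + 2) ^ 2 * m ((i : ℕ) + 1) + e ((i : ℕ) + 1) ^ 2 * m ((i : ℕ) + 2)
    else if (i : ℕ) + 1 = (j : ℕ) then
      -(e ((i : ℕ) + 1) * e ((i : ℕ) + 3) * m ((i : ℕ) + 2))
    else if (j : ℕ) + 1 = (i : ℕ) then
      -(e ((j : ℕ) + 1) * e ((j : ℕ) + 3) * m ((j : ℕ) + 2))
    else 0

def chargeMassFactor (e : ℕ → R) (n : ℕ) : Matrix (Fin (n + 1)) (Fin n) R :=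
  Matrix.of fun k j =>
    if (k : ℕ) = j then e (j + 2) else if (k : ℕ) = j + 1 then -e (j + 1) else 0

lemma chargeMassFactor_apply_eq_zero (e : ℕ → R) {n : ℕ} {k : Fin (n + 1)} {j : Fin n}
    (h₀ : k ≠ j.castSucc) (h₁ : k ≠ j.succ) : chargeMassFactor e n k j = 0 := by
  rw [Ne, Fin.ext_iff, Fin.val_castSucc] at h₀
  rw [Ne, Fin.ext_iff, Fin.val_succ] at h₁
  simp only [chargeMassFactor, of_apply, if_neg h₀, if_neg h₁]

theorem chargeMassMatrix_eq_transpose_mul_diagonal_mul (e m : ℕ → R) (n : ℕ) :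
    chargeMassMatrix e m n =
      (chargeMassFactor e n)ᵀ * diagonal (fun k : Fin (n + 1) => m (k + 1)) *
        chargeMassFactor e n := by
  ext i j
  rw [mul_apply]
  simp only [mul_diagonal, transpose_apply]
  rw [Fintype.sum_eq_add i.castSucc i.succ Fin.castSucc_lt_succ.ne fun k hk => by
    rw [chargeMassFactor_apply_eq_zero e hk.1 hk.2, zero_mul, zero_mul]]
  simp only [chargeMassMatrix, chargeMassFactor, of_apply, Fin.val_castSucc, Fin.val_succ]
  obtain h | h | h | h : (j : ℕ) = i ∨ (j : ℕ) = i + 1 ∨ (i : ℕ) = j + 1 ∨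
      ((j : ℕ) + 1 < i ∨ (i : ℕ) + 1 < j) := by
    omega
  · simp [h, add_assoc]; ring
  · simp [h, add_assoc]; ring
  · simp [h, add_assoc]; ring
  · split_ifs <;> first | omega | ring

lemma chargeMassFactor_submatrix_castSucc_isLowerTriangular (e : ℕ → R) (n : ℕ) :
    ((chargeMassFactor e n).submatrix Fin.castSucc id).IsLowerTriangular := by
  intro k j hkj
  have : (k : ℕ) < j := hkj
  simp only [chargeMassFactor, submatrix_apply, of_apply, id, Fin.val_castSucc]
  rw [if_neg (by omega), if_neg (by omega)]

lemma chargeMassFactor_mulVec_injective [IsDomain R] {e : ℕ → R} {n : ℕ}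
    (he : ∀ j < n, e (j + 2) ≠ 0) : Function.Injective (chargeMassFactor e n).mulVec := by
  have hdet : ((chargeMassFactor e n).submatrix Fin.castSucc id).det ≠ 0 := by
    rw [det_of_isLowerTriangular _ (chargeMassFactor_submatrix_castSucc_isLowerTriangular e n)]
    exact prod_ne_zero_iff.mpr fun j _ => by simpa [chargeMassFactor] using he j j.isLt
  intro x y hxy
  exact mulVec_injective_of_det_ne_zero hdet (congrArg (· ∘ Fin.castSucc) hxy)

end CommRing

theorem chargeMassMatrix_posDef {e m : ℕ → ℝ} {n : ℕ} (he : ∀ j < n, e (j + 2) ≠ 0)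
    (hm : ∀ k ≤ n, 0 < m (k + 1)) : (chargeMassMatrix e m n).PosDef := by
  rw [chargeMassMatrix_eq_transpose_mul_diagonal_mul, ← conjTranspose_eq_transpose_of_trivial]
  exact (PosDef.diagonal fun k : Fin (n + 1) => hm k k.is_le).conjTranspose_mul_mul_same
    (chargeMassFactor_mulVec_injective he)

theorem tridiagonal_charge_mass_det_pos_invertible (N : ℕ) (hN : 2 ≤ N) (e m : ℕ → ℝ)
    (he : ∀ i, 1 ≤ i → i ≤ N → e i ≠ 0)
    (hm : ∀ i, 1 ≤ i → i ≤ N → 0 < m i) :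
    0 < (Matrix.of fun i j : Fin (N - 1) =>
      if (i : ℕ) = (j : ℕ) then
        e ((i : ℕ) + 2) ^ 2 * m ((i : ℕ) + 1) + e ((i : ℕ) + 1) ^ 2 * m ((i : ℕ) + 2)
      else if (i : ℕ) + 1 = (j : ℕ) then
        -(e ((i : ℕ) + 1) * e ((i : ℕ) + 3) * m ((i : ℕ) + 2))
      else if (j : ℕ) + 1 = (i : ℕ) then
        -(e ((j : ℕ) + 1) * e ((j : ℕ) + 3) * m ((j : ℕ) + 2))
      else 0).det ∧
    IsUnit (Matrix.of fun i j : Fin (N - 1) =>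
      if (i : ℕ) = (j : ℕ) then
        e ((i : ℕ) + 2) ^ 2 * m ((i : ℕ) + 1) + e ((i : ℕ) + 1) ^ 2 * m ((i : ℕ) + 2)
      else if (i : ℕ) + 1 = (j : ℕ) then
        -(e ((i : ℕ) + 1) * e ((i : ℕ) + 3) * m ((i : ℕ) + 2))
      else if (j : ℕ) + 1 = (i : ℕ) then
        -(e ((j : ℕ) + 1) * e ((j : ℕ) + 3) * m ((j : ℕ) + 2))
      else 0) := by
  obtain ⟨n, rfl⟩ : ∃ n, N = n + 1 := ⟨N - 1, by omega⟩
  have hpos : (chargeMassMatrix e m n).PosDef :=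
    chargeMassMatrix_posDef (fun j hj => he _ (by omega) (by omega))
      (fun k hk => hm _ (by omega) (by omega))
  exact ⟨hpos.det_pos, hpos.isUnit⟩
end

section
/- Let N ≥ 1, m_α, m_α* > 0, e_α ∈ ℝ. For solutions (r(t), u(t)) of the third-order effective system d/dt(∂L_D/∂u_α) = ∂L_D/∂r_α + (e_α/6π) ∑_{β=1}^N e_β ü_β (α = 1,…,N), where L_D is the Darwin Lagrangian, the modified energy H_RR(r, u, u̇) = H_D(r, u) − ∑_{α,β} (e_α e_β/6π) u_α·u̇_β satisfies d/dt H_RR = −(1/6π) (∑_{α=1}^N e_α u̇_α)². In particular H_RR is nonincreasing along solutions. -/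
/-!
The Darwin Lagrangian is a sum of parts homogeneous of degrees 0, 2 and 4 in the velocities, so
Euler's identity for homogeneous functions gives `H_D = ∑ u_α · ∂L_D/∂u_α - L_D`. Along a solution
of the Euler–Lagrange equations driven by a generalized force `G_α`, this Legendre transform
changes at the rate `∑ u_α · G_α`. With the dipole moment `d = ∑ e_α r_α` the radiation force is
`G_α = (e_α / 6π) d⃛`, so this rate is `ḋ · d⃛ / 6π`, while the correction term of `H_RR` is
`ḋ · d̈ / 6π`, whose rate is `(|d̈|² + ḋ · d⃛) / 6π`. The difference is `-|d̈|² / 6π`.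
-/

open Finset Real Function

section Calculus

variable {X Y : Type*} [NormedAddCommGroup X] [NormedSpace ℝ X]
  [NormedAddCommGroup Y] [NormedSpace ℝ Y] {f : X → Y → ℝ} {x : X} {y : Y}

theorem DifferentiableAt.of_uncurry_left (hf : DifferentiableAt ℝ (uncurry f) (x, y)) :
    DifferentiableAt ℝ (fun x' => f x' y) x :=
  hf.comp (f := fun x' => (x', y)) x (differentiableAt_id.prodMk (differentiableAt_const y))

theorem DifferentiableAt.of_uncurry_right (hf : DifferentiableAt ℝ (uncurry f) (x, y)) :
    DifferentiableAt ℝ (f x) y :=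
  hf.comp (f := fun y' => (x, y')) y ((differentiableAt_const x).prodMk differentiableAt_id)

theorem fderiv_uncurry_apply (hf : DifferentiableAt ℝ (uncurry f) (x, y)) (v : X) (w : Y) :
    fderiv ℝ (uncurry f) (x, y) (v, w) =
      fderiv ℝ (fun x' => f x' y) x v + fderiv ℝ (f x) y w := by
  have hx : HasFDerivAt (fun x' => f x' y) _ x :=
    hf.hasFDerivAt.comp (f := fun x' => (x', y)) x (hasFDerivAt_prodMk_left x y)
  have hy : HasFDerivAt (f x) _ y :=
    hf.hasFDerivAt.comp (f := fun y' => (x, y')) y (hasFDerivAt_prodMk_right x y)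
  rw [hx.fderiv, hy.fderiv, ContinuousLinearMap.comp_apply, ContinuousLinearMap.comp_apply,
    ← map_add]
  simp

theorem fderiv_apply_self_eq_of_smul_eq {g : X → ℝ} (hg : DifferentiableAt ℝ g x) {a b c : ℝ}
    (h : ∀ s : ℝ, g (s • x) = a + s ^ 2 * b + s ^ 4 * c) :
    fderiv ℝ g x x = 2 * b + 4 * c := by
  have hline : HasDerivAt (fun s : ℝ => s • x) x 1 := by
    simpa using (hasDerivAt_id (1 : ℝ)).smul_const x
  have hcomp : HasDerivAt (fun s : ℝ => g (s • x)) (fderiv ℝ g x x) 1 :=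
    hg.hasFDerivAt.comp_hasDerivAt_of_eq 1 hline (one_smul ℝ x).symm
  have hpoly : HasDerivAt (fun s : ℝ => a + s ^ 2 * b + s ^ 4 * c) (2 * b + 4 * c) 1 := by
    have := (((hasDerivAt_pow 2 (1 : ℝ)).mul_const b).const_add a).fun_add
      ((hasDerivAt_pow 4 (1 : ℝ)).mul_const c)
    norm_num at this
    exact this
  exact hcomp.unique (by simpa only [h] using hpoly)

end Calculus

section PartialGradient

variable {E : Type*} [NormedAddCommGroup E] [InnerProductSpace ℝ E] [CompleteSpace E]
  {ι : Type*} [Fintype ι] [DecidableEq ι]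

theorem inner_gradient_update_eq_fderiv_single {f : (ι → E) → ℝ} {x : ι → E}
    (hf : DifferentiableAt ℝ f x) (α : ι) (c : E) :
    inner ℝ (gradient (fun w => f (update x α w)) (x α)) c = fderiv ℝ f x (Pi.single α c) := by
  have hf' : HasFDerivAt f (fderiv ℝ f x) (update x α (x α)) := by
    rw [update_eq_self]
    exact hf.hasFDerivAt
  have hcomp : HasFDerivAt (fun w => f (update x α w)) _ (x α) :=
    hf'.comp (x α) (hasFDerivAt_update x (x α))
  rw [inner_gradient_left, hcomp.fderiv, ContinuousLinearMap.comp_apply]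
  congr 1
  funext i
  rcases eq_or_ne i α with rfl | hi <;> simp [*]

theorem fderiv_apply_eq_sum_inner_gradient_update {f : (ι → E) → ℝ} {x : ι → E}
    (hf : DifferentiableAt ℝ f x) (v : ι → E) :
    fderiv ℝ f x v = ∑ α, inner ℝ (gradient (fun w => f (update x α w)) (x α)) (v α) := by
  conv_lhs => rw [← Finset.univ_sum_single v]
  simp only [map_sum, inner_gradient_update_eq_fderiv_single hf]

theorem hasDerivAt_sum_inner_gradient_sub_of_euler_lagrange {L : (ι → E) → (ι → E) → ℝ}
    {r u u' : ℝ → ι → E} {G : ι → E} {t : ℝ}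
    (hL : DifferentiableAt ℝ (uncurry L) (r t, u t))
    (hr : ∀ α, HasDerivAt (fun s => r s α) (u t α) t)
    (hu : ∀ α, HasDerivAt (fun s => u s α) (u' t α) t)
    (hEL : ∀ α, HasDerivAt
      (fun s => gradient (fun w => L (r s) (update (u s) α w)) (u s α))
      (gradient (fun w => L (update (r t) α w) (u t)) (r t α) + G α) t) :
    HasDerivAt
      (fun s => ∑ α, inner ℝ (u s α) (gradient (fun w => L (r s) (update (u s) α w)) (u s α)) -
        L (r s) (u s))
      (∑ α, inner ℝ (u t α) (G α)) t := by
  have hcurve : HasDerivAt (fun s => (r s, u s)) (u t, u' t) t :=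
    (hasDerivAt_pi.2 hr).prodMk (hasDerivAt_pi.2 hu)
  have hLt : HasDerivAt (fun s => L (r s) (u s)) (fderiv ℝ (uncurry L) (r t, u t) (u t, u' t)) t :=
    (hL.hasFDerivAt.comp_hasDerivAt t hcurve :)
  have hmom := HasDerivAt.fun_sum fun α (_ : α ∈ univ) => (hu α).inner ℝ (hEL α)
  refine (hmom.sub hLt).congr_deriv ?_
  rw [fderiv_uncurry_apply hL, fderiv_apply_eq_sum_inner_gradient_update hL.of_uncurry_left,
    fderiv_apply_eq_sum_inner_gradient_update hL.of_uncurry_right]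
  simp only [inner_add_right, sum_add_distrib, real_inner_comm (u t _), real_inner_comm (u' t _)]
  ring

end PartialGradient

section Dipole

variable {E : Type*} [NormedAddCommGroup E] [InnerProductSpace ℝ E]
  {ι : Type*} [Fintype ι]

theorem sum_sum_mul_inner_div (e : ι → ℝ) (κ : ℝ) (x y : ι → E) :
    ∑ α, ∑ β, e α * e β / κ * inner ℝ (x α) (y β) =
      inner ℝ (∑ α, e α • x α) (∑ β, e β • y β) / κ := by
  rw [sum_inner, sum_div]
  simp only [inner_sum, real_inner_smul_left, real_inner_smul_right, sum_div]
  exact sum_congr rfl fun α _ => sum_congr rfl fun β _ => by ring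

theorem sum_inner_smul_div (e : ι → ℝ) (κ : ℝ) (x : ι → E) (z : E) :
    ∑ α, inner ℝ (x α) ((e α / κ) • z) = inner ℝ (∑ α, e α • x α) z / κ := by
  simp only [sum_inner, real_inner_smul_left, real_inner_smul_right, sum_div]
  exact sum_congr rfl fun α _ => by ring

end Dipole

namespace Darwin

variable {E : Type*} [NormedAddCommGroup E] [InnerProductSpace ℝ E]
  {ι : Type*} [Fintype ι] [DecidableEq ι]

noncomputable section

def coulombEnergy (e : ι → ℝ) (r : ι → E) : ℝ :=
  (1 / 2) * ∑ α, ∑ β ∈ univ.erase α, e α * e β / (4 * π * ‖r α - r β‖)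

def magneticEnergy (e : ι → ℝ) (r u : ι → E) : ℝ :=
  (1 / 4) * ∑ α, ∑ β ∈ univ.erase α, (e α * e β / (4 * π * ‖r α - r β‖)) *
    (inner ℝ (u α) (u β) +
      (‖r α - r β‖ ^ 2)⁻¹ * inner ℝ (u α) (r α - r β) * inner ℝ (u β) (r α - r β))

def lagrangian (m mstar e : ι → ℝ) (r u : ι → E) : ℝ :=
  ∑ α, ((1 / 2) * m α * ‖u α‖ ^ 2 + (1 / 8) * mstar α * ‖u α‖ ^ 4) - coulombEnergy e r +
    magneticEnergy e r u

def energy (m mstar e : ι → ℝ) (r u : ι → E) : ℝ :=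
  ∑ α, ((1 / 2) * m α * ‖u α‖ ^ 2 + (3 / 8) * mstar α * ‖u α‖ ^ 4) + coulombEnergy e r +
    magneticEnergy e r u

end

variable (m mstar e : ι → ℝ) (r u : ι → E)

theorem magneticEnergy_smul (c : ℝ) :
    magneticEnergy e r (c • u) = c ^ 2 * magneticEnergy e r u := by
  simp only [magneticEnergy, Pi.smul_apply, real_inner_smul_left, real_inner_smul_right, mul_sum]
  exact sum_congr rfl fun α _ => sum_congr rfl fun β _ => by ring

theorem lagrangian_smul (c : ℝ) :
    lagrangian m mstar e r (c • u) = -coulombEnergy e r +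
      c ^ 2 * (∑ α, (1 / 2) * m α * ‖u α‖ ^ 2 + magneticEnergy e r u) +
      c ^ 4 * ∑ α, (1 / 8) * mstar α * ‖u α‖ ^ 4 := by
  have hkin : ∀ α, (1 / 2) * m α * ‖(c • u) α‖ ^ 2 + (1 / 8) * mstar α * ‖(c • u) α‖ ^ 4 =
      c ^ 2 * ((1 / 2) * m α * ‖u α‖ ^ 2) + c ^ 4 * ((1 / 8) * mstar α * ‖u α‖ ^ 4) := by
    intro α
    rw [Pi.smul_apply, norm_smul, Real.norm_eq_abs, mul_pow, mul_pow, sq_abs,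
      Even.pow_abs ⟨2, rfl⟩]
    ring
  rw [lagrangian, magneticEnergy_smul, sum_congr rfl fun α _ => hkin α, sum_add_distrib,
    ← mul_sum, ← mul_sum]
  ring

theorem energy_add_lagrangian :
    energy m mstar e r u + lagrangian m mstar e r u =
      2 * (∑ α, (1 / 2) * m α * ‖u α‖ ^ 2 + magneticEnergy e r u) +
      4 * ∑ α, (1 / 8) * mstar α * ‖u α‖ ^ 4 := by
  simp only [energy, lagrangian, sum_add_distrib]
  have h : ∑ α, (3 / 8) * mstar α * ‖u α‖ ^ 4 = 3 * ∑ α, (1 / 8) * mstar α * ‖u α‖ ^ 4 := by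
    rw [mul_sum]; exact sum_congr rfl fun α _ => by ring
  rw [h]
  ring

theorem differentiableAt_lagrangian (hr : Injective r) :
    DifferentiableAt ℝ (uncurry (lagrangian m mstar e)) (r, u) := by
  show DifferentiableAt ℝ (fun p : (ι → E) × (ι → E) => lagrangian m mstar e p.1 p.2) (r, u)
  have hv : ∀ α, DifferentiableAt ℝ (fun p : (ι → E) × (ι → E) => p.2 α) (r, u) := by fun_prop
  have hv2 : ∀ α, DifferentiableAt ℝ (fun p : (ι → E) × (ι → E) => ‖p.2 α‖ ^ 2) (r, u) :=
    fun α => (hv α).norm_sq ℝ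
  have hv4 : ∀ α, DifferentiableAt ℝ (fun p : (ι → E) × (ι → E) => ‖p.2 α‖ ^ 4) (r, u) :=
    fun α => by simpa [← pow_mul] using (hv2 α).fun_pow 2
  unfold lagrangian coulombEnergy magneticEnergy
  refine ((DifferentiableAt.fun_sum fun α _ => ?_).sub ((differentiableAt_const _).mul
    (DifferentiableAt.fun_sum fun α _ => DifferentiableAt.fun_sum fun β hβ => ?_))).add
    ((differentiableAt_const _).mul
      (DifferentiableAt.fun_sum fun α _ => DifferentiableAt.fun_sum fun β hβ => ?_))
  · have := hv2 α
    have := hv4 α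
    fun_prop
  all_goals
    have hne : r α - r β ≠ 0 := sub_ne_zero.2 (hr.ne (ne_of_mem_erase hβ).symm)
    have hd : DifferentiableAt ℝ (fun p : (ι → E) × (ι → E) => p.1 α - p.1 β) (r, u) := by
      fun_prop
    have := hd.norm ℝ hne
    have := hd.norm_sq ℝ
    have := (hv α).inner ℝ (hv β)
    have := (hv α).inner ℝ hd
    have := (hv β).inner ℝ hd
    have := norm_ne_zero_iff.2 hne
    fun_prop (disch := first | positivity | assumption)

theorem energy_eq_sum_inner_gradient_sub [CompleteSpace E] (hr : Injective r) :
    energy m mstar e r u =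
      ∑ α, inner ℝ (u α) (gradient (fun w => lagrangian m mstar e r (update u α w)) (u α)) -
        lagrangian m mstar e r u := by
  have hd := (differentiableAt_lagrangian m mstar e r u hr).of_uncurry_right
  have hsum : ∑ α, inner ℝ (u α) (gradient (fun w => lagrangian m mstar e r (update u α w)) (u α))
      = fderiv ℝ (lagrangian m mstar e r) u u := by
    rw [fderiv_apply_eq_sum_inner_gradient_update hd]
    simp only [real_inner_comm (u _)]
  rw [hsum, fderiv_apply_self_eq_of_smul_eq hd (lagrangian_smul m mstar e r u)]
  linarith [energy_add_lagrangian m mstar e r u]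

end Darwin

theorem radiation_reaction_energy_dissipation_general (N : ℕ)
    (m mstar e : Fin N → ℝ)
    (r u u' u'' : ℝ → Fin N → EuclideanSpace ℝ (Fin 3))
    (L HD : (Fin N → EuclideanSpace ℝ (Fin 3)) →
      (Fin N → EuclideanSpace ℝ (Fin 3)) → ℝ)
    (hL : ∀ rr uu, L rr uu =
      (∑ α, ((1 / 2) * m α * ‖uu α‖ ^ 2 + (1 / 8) * mstar α * ‖uu α‖ ^ 4))
      - (1 / 2) * (∑ α, ∑ β ∈ Finset.univ.erase α,
          e α * e β / (4 * Real.pi * ‖rr α - rr β‖))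
      + (1 / 4) * (∑ α, ∑ β ∈ Finset.univ.erase α,
          (e α * e β / (4 * Real.pi * ‖rr α - rr β‖)) *
            ((inner ℝ (uu α) (uu β) : ℝ) +
              (‖rr α - rr β‖ ^ 2)⁻¹ * (inner ℝ (uu α) (rr α - rr β) : ℝ) *
                (inner ℝ (uu β) (rr α - rr β) : ℝ))))
    (hHD : ∀ rr uu, HD rr uu =
      (∑ α, ((1 / 2) * m α * ‖uu α‖ ^ 2 + (3 / 8) * mstar α * ‖uu α‖ ^ 4))
      + (1 / 2) * (∑ α, ∑ β ∈ Finset.univ.erase α,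
          e α * e β / (4 * Real.pi * ‖rr α - rr β‖))
      + (1 / 4) * (∑ α, ∑ β ∈ Finset.univ.erase α,
          (e α * e β / (4 * Real.pi * ‖rr α - rr β‖)) *
            ((inner ℝ (uu α) (uu β) : ℝ) +
              (‖rr α - rr β‖ ^ 2)⁻¹ * (inner ℝ (uu α) (rr α - rr β) : ℝ) *
                (inner ℝ (uu β) (rr α - rr β) : ℝ))))
    (hsep : ∀ t : ℝ, ∀ α β, α ≠ β → r t α ≠ r t β)
    (hr : ∀ t α, HasDerivAt (fun s => r s α) (u t α) t)
    (hu : ∀ t α, HasDerivAt (fun s => u s α) (u' t α) t)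
    (hu' : ∀ t α, HasDerivAt (fun s => u' s α) (u'' t α) t)
    (hEOM : ∀ t α, HasDerivAt
      (fun s => gradient (fun w => L (r s) (Function.update (u s) α w)) (u s α))
      (gradient (fun w => L (Function.update (r t) α w) (u t)) (r t α) +
        (e α / (6 * Real.pi)) • ∑ β, e β • u'' t β) t) :
    ∀ t : ℝ, HasDerivAt
      (fun s => HD (r s) (u s) -
        ∑ α, ∑ β, (e α * e β / (6 * Real.pi)) * (inner ℝ (u s α) (u' s β) : ℝ))
      (-(1 / (6 * Real.pi)) * ‖∑ α, e α • u' t α‖ ^ 2) t := by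
  intro t
  obtain rfl : L = Darwin.lagrangian m mstar e := funext₂ hL
  obtain rfl : HD = Darwin.energy m mstar e := funext₂ hHD
  have hinj : ∀ s, Injective (r s) := fun s α β h => by_contra fun hne => hsep s α β hne h
  have hdip : HasDerivAt (fun s => ∑ α, e α • u s α) (∑ α, e α • u' t α) t :=
    HasDerivAt.fun_sum fun α _ => (hu t α).const_smul (e α)
  have hdip' : HasDerivAt (fun s => ∑ α, e α • u' s α) (∑ α, e α • u'' t α) t :=
    HasDerivAt.fun_sum fun α _ => (hu' t α).const_smul (e α)
  have hbalance := hasDerivAt_sum_inner_gradient_sub_of_euler_lagrange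
    (Darwin.differentiableAt_lagrangian m mstar e _ _ (hinj t)) (hr t) (hu t) (hEOM t)
  simp only [Darwin.energy_eq_sum_inner_gradient_sub m mstar e _ _ (hinj _),
    sum_sum_mul_inner_div]
  refine (hbalance.sub ((hdip.inner ℝ hdip').div_const (6 * π))).congr_deriv ?_
  rw [sum_inner_smul_div, real_inner_self_eq_norm_sq]
  ring

theorem radiation_reaction_energy_dissipation (N : ℕ)
    (m mstar e : Fin N → ℝ) (hm : ∀ α, 0 < m α) (hmstar : ∀ α, 0 < mstar α)
    (r u u' u'' : ℝ → Fin N → EuclideanSpace ℝ (Fin 3))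
    (L HD : (Fin N → EuclideanSpace ℝ (Fin 3)) →
      (Fin N → EuclideanSpace ℝ (Fin 3)) → ℝ)
    (hL : ∀ rr uu, L rr uu =
      (∑ α, ((1 / 2) * m α * ‖uu α‖ ^ 2 + (1 / 8) * mstar α * ‖uu α‖ ^ 4))
      - (1 / 2) * (∑ α, ∑ β ∈ Finset.univ.erase α,
          e α * e β / (4 * Real.pi * ‖rr α - rr β‖))
      + (1 / 4) * (∑ α, ∑ β ∈ Finset.univ.erase α,
          (e α * e β / (4 * Real.pi * ‖rr α - rr β‖)) *
            ((inner ℝ (uu α) (uu β) : ℝ) +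
              (‖rr α - rr β‖ ^ 2)⁻¹ * (inner ℝ (uu α) (rr α - rr β) : ℝ) *
                (inner ℝ (uu β) (rr α - rr β) : ℝ))))
    (hHD : ∀ rr uu, HD rr uu =
      (∑ α, ((1 / 2) * m α * ‖uu α‖ ^ 2 + (3 / 8) * mstar α * ‖uu α‖ ^ 4))
      + (1 / 2) * (∑ α, ∑ β ∈ Finset.univ.erase α,
          e α * e β / (4 * Real.pi * ‖rr α - rr β‖))
      + (1 / 4) * (∑ α, ∑ β ∈ Finset.univ.erase α,
          (e α * e β / (4 * Real.pi * ‖rr α - rr β‖)) *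
            ((inner ℝ (uu α) (uu β) : ℝ) +
              (‖rr α - rr β‖ ^ 2)⁻¹ * (inner ℝ (uu α) (rr α - rr β) : ℝ) *
                (inner ℝ (uu β) (rr α - rr β) : ℝ))))
    (hsep : ∀ t : ℝ, ∀ α β, α ≠ β → r t α ≠ r t β)
    (hr : ∀ t α, HasDerivAt (fun s => r s α) (u t α) t)
    (hu : ∀ t α, HasDerivAt (fun s => u s α) (u' t α) t)
    (hu' : ∀ t α, HasDerivAt (fun s => u' s α) (u'' t α) t)
    (hEOM : ∀ t α, HasDerivAt
      (fun s => gradient (fun w => L (r s) (Function.update (u s) α w)) (u s α))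
      (gradient (fun w => L (Function.update (r t) α w) (u t)) (r t α) +
        (e α / (6 * Real.pi)) • ∑ β, e β • u'' t β) t) :
    ∀ t : ℝ, HasDerivAt
      (fun s => HD (r s) (u s) -
        ∑ α, ∑ β, (e α * e β / (6 * Real.pi)) * (inner ℝ (u s α) (u' s β) : ℝ))
      (-(1 / (6 * Real.pi)) * ‖∑ α, e α • u' t α‖ ^ 2) t :=
  radiation_reaction_energy_dissipation_general N m mstar e r u u' u'' L HD hL hHD hsep hr hu hu'
    hEOM
end
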